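/- If θ* ∈ ℝ^d satisfies Σ_s d(s) Σ_a Q(s,a) π_{θ*}(a|s) ∇_θ log π_θ(a|s)|_{θ=θ*} = 0 (i.e., the policy-gradient update vanishes at θ*, as it does at an optimal policy by the policy gradient theorem), then θ* is a critical point of the map θ ↦ Σ_s d(s) · V_{π_{θ*}}(s) · KL(Qπ_{θ*}(·|s) ‖ π_θ(·|s)); that is, the gradient of this map at θ = θ* is zero. -/

import Mathlib

/-- Value function `V_μ(s) = ∑ a, Q(s,a) * μ(a|s)`. -/
noncomputable def Vval {S A : Type*} [Fintype A] (Q : S → A → ℝ) (μ : S → A → ℝ) (s : S) : ℝ :=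
  ∑ a, Q s a * μ s a

/-- Improved conditional policy `Qμ(a|s) = Q(s,a) * μ(a|s) / V_μ(s)`. -/
noncomputable def impCond {S A : Type*} [Fintype A] (Q : S → A → ℝ) (μ : S → A → ℝ)
    (s : S) (a : A) : ℝ :=
  Q s a * μ s a / Vval Q μ s

/-- KL divergence between pmfs on a finite type (with `0 * log 0 = 0`). -/
noncomputable def klDiv {A : Type*} [Fintype A] (p q : A → ℝ) : ℝ :=
  ∑ a, p a * Real.log (p a / q a)

/-!
The distribution `Qπ_{θ*}(·|s)` does not depend on `θ`, and `V(s) · Qπ_{θ*}(a|s) = Q(s,a) π_{θ*}(a|s)`.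
Expanding the KL divergence, the objective is therefore a constant minus
`∑ s, d s * ∑ a, Q s a * π_{θ*}(a|s) * log π_θ(a|s)`, whose gradient at `θ*` is minus the
policy-gradient update.
-/

open Finset

section Gradient

variable {F : Type*} [NormedAddCommGroup F] [InnerProductSpace ℝ F] [CompleteSpace F]
  {f : F → ℝ} {f' x : F}

theorem HasGradientAt.const_mul (hf : HasGradientAt f f' x) (c : ℝ) :
    HasGradientAt (fun y => c * f y) (c • f') x := by
  rw [hasGradientAt_iff_hasFDerivAt, map_smul]
  exact HasFDerivAt.const_mul hf c

theorem HasGradientAt.const_sub (hf : HasGradientAt f f' x) (c : ℝ) :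
    HasGradientAt (fun y => c - f y) (-f') x := by
  rw [hasGradientAt_iff_hasFDerivAt, map_neg]
  exact HasFDerivAt.const_sub hf c

theorem HasGradientAt.fun_sum {ι : Type*} {u : Finset ι} {g : ι → F → ℝ} {g' : ι → F}
    (h : ∀ i ∈ u, HasGradientAt (g i) (g' i) x) :
    HasGradientAt (fun y => ∑ i ∈ u, g i y) (∑ i ∈ u, g' i) x := by
  rw [hasGradientAt_iff_hasFDerivAt, map_sum]
  exact HasFDerivAt.fun_sum h

end Gradient

theorem klDiv_eq_sub {A : Type*} [Fintype A] (p : A → ℝ) {q : A → ℝ} (hq : ∀ a, q a ≠ 0) :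
    klDiv p q = ∑ a, p a * Real.log (p a) - ∑ a, p a * Real.log (q a) := by
  rw [klDiv, ← sum_sub_distrib]
  refine sum_congr rfl fun a _ => ?_
  rcases eq_or_ne (p a) 0 with hp | hp
  · simp [hp]
  · rw [Real.log_div hp (hq a), mul_sub]

section Policy

variable {S A : Type*} [Fintype A] {Q μ : S → A → ℝ} {s : S}

theorem Vval_pos [Nonempty A] (hQ : ∀ a, 0 < Q s a) (hμ : ∀ a, 0 < μ s a) :
    0 < Vval Q μ s :=
  sum_pos (fun a _ => mul_pos (hQ a) (hμ a)) univ_nonempty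

theorem Vval_mul_impCond (hQ : ∀ a, 0 < Q s a) (hμ : ∀ a, 0 < μ s a) (a : A) :
    Vval Q μ s * impCond Q μ s a = Q s a * μ s a :=
  have : Nonempty A := ⟨a⟩
  mul_div_cancel₀ _ (Vval_pos hQ hμ).ne'

theorem Vval_mul_klDiv_impCond (hQ : ∀ a, 0 < Q s a) (hμ : ∀ a, 0 < μ s a) {q : A → ℝ}
    (hq : ∀ a, q a ≠ 0) :
    Vval Q μ s * klDiv (impCond Q μ s) q
      = ∑ a, Q s a * μ s a * Real.log (impCond Q μ s a)
        - ∑ a, Q s a * μ s a * Real.log (q a) := by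
  simp only [klDiv_eq_sub _ hq, mul_sub, mul_sum, ← mul_assoc, Vval_mul_impCond hQ hμ]

end Policy

theorem fixed_point_operator_reinforce_state_action_general
    {S A : Type*} [Fintype S] [Fintype A] {n : ℕ}
    (d : S → ℝ)
    (Q : S → A → ℝ) (hQ : ∀ s a, 0 < Q s a)
    (π : EuclideanSpace ℝ (Fin n) → S → A → ℝ)
    (hπpos : ∀ θ s a, 0 < π θ s a)
    (hπdiff : ∀ s a, Differentiable ℝ (fun θ => π θ s a))
    (θs : EuclideanSpace ℝ (Fin n))
    (hstat : ∑ s, d s • ∑ a, (Q s a * π θs s a) • gradient (fun θ => Real.log (π θ s a)) θs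
      = 0) :
    gradient
        (fun θ => ∑ s, d s * Vval Q (π θs) s * klDiv (impCond Q (π θs) s) (π θ s)) θs
      = 0 := by
  have hlog : ∀ s a, HasGradientAt (fun θ => Real.log (π θ s a))
      (gradient (fun θ => Real.log (π θ s a)) θs) θs := fun s a =>
    ((hπdiff s a θs).log (hπpos θs s a).ne').hasGradientAt
  have hgrad := HasGradientAt.fun_sum fun s (_ : s ∈ univ) =>
    ((HasGradientAt.fun_sum fun a (_ : a ∈ univ) => (hlog s a).const_mul
      (Q s a * π θs s a)).const_sub
        (∑ a, Q s a * π θs s a * Real.log (impCond Q (π θs) s a))).const_mul (d s)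
  simp only [smul_neg, sum_neg_distrib, hstat, neg_zero] at hgrad
  refine (hgrad.congr_of_eventuallyEq (Filter.Eventually.of_forall fun θ => ?_)).gradient
  refine sum_congr rfl fun s _ => ?_
  rw [mul_assoc, Vval_mul_klDiv_impCond (hQ s) (hπpos θs s) (fun a => (hπpos θ s a).ne')]

/-- If the policy-gradient update vanishes at `θ*`, then `θ*` is a critical point of
`θ ↦ ∑ s, d(s) * V_{π_{θ*}}(s) * KL(Qπ_{θ*}(·|s) ‖ π_θ(·|s))`. -/
theorem fixed_point_operator_reinforce_state_action
    {S A : Type*} [Fintype S] [Fintype A] [Nonempty S] [Nonempty A] {n : ℕ}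
    (d : S → ℝ) (hd : ∀ s, 0 ≤ d s)
    (Q : S → A → ℝ) (hQ : ∀ s a, 0 < Q s a)
    (π : EuclideanSpace ℝ (Fin n) → S → A → ℝ)
    (hπpos : ∀ θ s a, 0 < π θ s a)
    (hπsum : ∀ θ s, ∑ a, π θ s a = 1)
    (hπdiff : ∀ s a, Differentiable ℝ (fun θ => π θ s a))
    (θs : EuclideanSpace ℝ (Fin n))
    (hstat : ∑ s, d s • ∑ a, (Q s a * π θs s a) • gradient (fun θ => Real.log (π θ s a)) θs
      = 0) :
    gradient
        (fun θ => ∑ s, d s * Vval Q (π θs) s * klDiv (impCond Q (π θs) s) (π θ s)) θs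
      = 0 :=
  fixed_point_operator_reinforce_state_action_general d Q hQ π hπpos hπdiff θs hstat
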